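/- With G, H, G_i, S_1, S as above (S_1 finite, disjoint from (⋃_i G_i) ∪ H, with maximal word length N_0 − 1; S the set of words containing for each i a nonzero power of some g_{i,j}, j ≥ 2, and beginning and ending with powers of each g_{i,1} of exponent ≥ 2N_0 − 1 in absolute value), one has (S_1 H) ∩ (S_1 S) = ∅, (H S_1) ∩ (S_1 S) = ∅, (H S_1) ∩ (S S_1) = ∅, and (S_1 H) ∩ (S S_1) = ∅. -/

import Mathlib

/-!
Fix a coordinate `i` and write `a` for `g_{i,1}`. A point of `S₁H ∪ HS₁` is there of the form
`a^p s a^q` with `|s| < N₀`. A point of `S₁S` is `s' a^m w a^k` there; writing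
`s' = a^f r a^e` with `r ≠ 1` neither beginning nor ending with `a^{±1}` (possible as
`s' ∉ G_i`) turns it into `a^f (r a^(e+m) w) a^k`. As `e + m ≠ 0`, for all `x, y` the
reduced words of `a^x`, `r`, `a^(e+m)`, `w`, `a^y` concatenate without cancellation, so every
element of the double coset `⟨a⟩ s' a^m w a^k ⟨a⟩` has length at least
`|e + m| ≥ |m| - |s'|`, which exceeds `|s|` since `|m| ≥ 2N₀ - 1`.
Points of `SS₁` are reduced to this case by inversion.
-/

open Pointwise

def startsWithGen {n : ℕ} (j : Fin n) (w : FreeGroup (Fin n)) : Prop :=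
  ∃ b : Bool, w.toWord.head? = some (j, b)

def endsWithGen {n : ℕ} (j : Fin n) (w : FreeGroup (Fin n)) : Prop :=
  ∃ b : Bool, w.toWord.getLast? = some (j, b)

/-- H = ⟨g_{1,1}⟩ × ⋯ × ⟨g_{N,1}⟩ inside G = F(n_1) × ⋯ × F(n_N). -/
def Hset (N : ℕ) (n : Fin N → ℕ) (hn : ∀ i, 2 ≤ n i) :
    Set (∀ i, FreeGroup (Fin (n i))) :=
  {w | ∀ i, ∃ m : ℤ,
    w i = (FreeGroup.of (⟨0, by have := hn i; omega⟩ : Fin (n i))) ^ m}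

/-- G_i: the i-th free factor replaced by ⟨g_{i,1}⟩. -/
def Giset (N : ℕ) (n : Fin N → ℕ) (hn : ∀ i, 2 ≤ n i) (i : Fin N) :
    Set (∀ j, FreeGroup (Fin (n j))) :=
  {w | ∃ m : ℤ,
    w i = (FreeGroup.of (⟨0, by have := hn i; omega⟩ : Fin (n i))) ^ m}

/-- total reduced word length of an element of the direct product. -/
def wordLen (N : ℕ) (n : Fin N → ℕ) (w : ∀ i, FreeGroup (Fin (n i))) : ℕ :=
  ∑ i, (w i).toWord.length

/-- The set S: words which, for every i, contain a nonzero power of some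
g_{i,j} with j ≥ 2 (i.e. have nontrivial middle part w_i in the canonical
decomposition) and begin and end with powers of each g_{i,1} of exponent at
least 2N₀ − 1 in absolute value. -/
def Sset (N : ℕ) (n : Fin N → ℕ) (hn : ∀ i, 2 ≤ n i) (N0 : ℕ) :
    Set (∀ i, FreeGroup (Fin (n i))) :=
  {w | ∀ i, ∃ (m k : ℤ) (wi : FreeGroup (Fin (n i))),
    w i = (FreeGroup.of (⟨0, by have := hn i; omega⟩ : Fin (n i))) ^ m * wi *
          (FreeGroup.of (⟨0, by have := hn i; omega⟩ : Fin (n i))) ^ k ∧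
    wi ≠ 1 ∧
    ¬ startsWithGen (⟨0, by have := hn i; omega⟩ : Fin (n i)) wi ∧
    ¬ endsWithGen (⟨0, by have := hn i; omega⟩ : Fin (n i)) wi ∧
    2 * (N0 : ℤ) - 1 ≤ |m| ∧ 2 * (N0 : ℤ) - 1 ≤ |k|}

theorem Option.forall_mem_fst_ne_iff {α β : Type*} {o : Option (α × β)} {a : α} :
    (∀ p ∈ o, p.1 ≠ a) ↔ ¬∃ b, o = some (a, b) := by
  rcases o with _ | ⟨c, b⟩ <;> simp

namespace FreeGroup

variable {α : Type*}

theorem isReduced_append_of_fst_ne {L₁ L₂ : List (α × Bool)} (h₁ : IsReduced L₁)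
    (h₂ : IsReduced L₂) (h : ∀ p ∈ L₁.getLast?, ∀ q ∈ L₂.head?, p.1 ≠ q.1) :
    IsReduced (L₁ ++ L₂) :=
  h₁.append h₂ fun p hp q hq hpq => absurd hpq (h p hp q hq)

theorem mk_singleton_mem_zpowers (a : α) (b : Bool) :
    mk [(a, b)] ∈ Subgroup.zpowers (of a) := by
  cases b
  exacts [inv_mem (Subgroup.mem_zpowers _), Subgroup.mem_zpowers _]

variable [DecidableEq α]

theorem toWord_of_zpow (a : α) (m : ℤ) :
    (of a ^ m).toWord = List.replicate m.natAbs (a, decide (0 ≤ m)) := by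
  rcases m with m | m
  · simp [toWord_of_pow]
  · rw [zpow_negSucc, toWord_inv, toWord_of_pow]
    simp [invRev]

theorem fst_eq_of_mem_toWord_of_zpow {a : α} {m : ℤ} {p : α × Bool}
    (hp : p ∈ (of a ^ m).toWord) : p.1 = a := by
  rw [toWord_of_zpow] at hp
  rw [List.eq_of_mem_replicate hp]

theorem IsReduced.toWord_mk {L : List (α × Bool)} (hL : IsReduced L) : (mk L).toWord = L := by
  rw [FreeGroup.toWord_mk, hL.reduce_eq]

def AvoidsAtEnds (a : α) (w : FreeGroup α) : Prop :=
  w ≠ 1 ∧ (¬∃ b, w.toWord.head? = some (a, b)) ∧ ¬∃ b, w.toWord.getLast? = some (a, b)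

namespace AvoidsAtEnds

variable {a : α} {r w : FreeGroup α}

theorem toWord_ne_nil (hw : AvoidsAtEnds a w) : w.toWord ≠ [] :=
  fun h => hw.1 (toWord_eq_nil_iff.mp h)

theorem fst_ne_of_mem_head? (hw : AvoidsAtEnds a w) : ∀ p ∈ w.toWord.head?, p.1 ≠ a :=
  Option.forall_mem_fst_ne_iff.mpr hw.2.1

theorem fst_ne_of_mem_getLast? (hw : AvoidsAtEnds a w) : ∀ p ∈ w.toWord.getLast?, p.1 ≠ a :=
  Option.forall_mem_fst_ne_iff.mpr hw.2.2

theorem inv (hw : AvoidsAtEnds a w) : AvoidsAtEnds a w⁻¹ := by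
  refine ⟨inv_ne_one.mpr hw.1, Option.forall_mem_fst_ne_iff.mp ?_,
    Option.forall_mem_fst_ne_iff.mp ?_⟩ <;>
    simp only [toWord_inv, invRev, List.head?_reverse, List.getLast?_reverse, List.getLast?_map,
      List.head?_map, Option.mem_map, forall_exists_index, and_imp, forall_apply_eq_imp_iff₂]
  exacts [hw.fst_ne_of_mem_getLast?, hw.fst_ne_of_mem_head?]

theorem toWord_zpow_mul_mul_zpow (hw : AvoidsAtEnds a w) (i j : ℤ) :
    (of a ^ i * w * of a ^ j).toWord = (of a ^ i).toWord ++ w.toWord ++ (of a ^ j).toWord := by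
  have hwj : IsReduced (w.toWord ++ (of a ^ j).toWord) :=
    isReduced_append_of_fst_ne isReduced_toWord isReduced_toWord fun p hp q hq => by
      rw [fst_eq_of_mem_toWord_of_zpow (List.mem_of_mem_head? hq)]
      exact hw.fst_ne_of_mem_getLast? p hp
  have hiwj : IsReduced ((of a ^ i).toWord ++ (w.toWord ++ (of a ^ j).toWord)) :=
    isReduced_append_of_fst_ne isReduced_toWord hwj fun p hp q hq => by
      rw [List.head?_append_of_ne_nil _ hw.toWord_ne_nil] at hq
      rw [fst_eq_of_mem_toWord_of_zpow (List.mem_of_mem_getLast? hp)]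
      exact (hw.fst_ne_of_mem_head? q hq).symm
  rw [← List.append_assoc] at hiwj
  rw [← hiwj.toWord_mk, ← mul_mk, ← mul_mk, mk_toWord, mk_toWord, mk_toWord]

theorem norm_zpow_mul_mul_zpow (hw : AvoidsAtEnds a w) (i j : ℤ) :
    norm (of a ^ i * w * of a ^ j) = i.natAbs + norm w + j.natAbs := by
  simp only [norm, hw.toWord_zpow_mul_mul_zpow, List.length_append, toWord_of_zpow,
    List.length_replicate]

theorem toWord_mul_zpow_mul (hr : AvoidsAtEnds a r) (hw : AvoidsAtEnds a w) {j : ℤ}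
    (hj : j ≠ 0) :
    (r * of a ^ j * w).toWord = r.toWord ++ (of a ^ j).toWord ++ w.toWord := by
  have hrj : IsReduced (r.toWord ++ (of a ^ j).toWord) :=
    isReduced_append_of_fst_ne isReduced_toWord isReduced_toWord fun p hp q hq => by
      rw [fst_eq_of_mem_toWord_of_zpow (List.mem_of_mem_head? hq)]
      exact hr.fst_ne_of_mem_getLast? p hp
  have hjw : IsReduced ((of a ^ j).toWord ++ w.toWord) :=
    isReduced_append_of_fst_ne isReduced_toWord isReduced_toWord fun p hp q hq => by
      rw [fst_eq_of_mem_toWord_of_zpow (List.mem_of_mem_getLast? hp)]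
      exact (hw.fst_ne_of_mem_head? q hq).symm
  have hj' : (of a ^ j).toWord ≠ [] := by simpa [toWord_of_zpow] using hj
  rw [← (hrj.append_overlap hjw hj').toWord_mk, ← mul_mk, ← mul_mk, mk_toWord, mk_toWord,
    mk_toWord]

theorem norm_mul_zpow_mul (hr : AvoidsAtEnds a r) (hw : AvoidsAtEnds a w) {j : ℤ}
    (hj : j ≠ 0) : norm (r * of a ^ j * w) = norm r + j.natAbs + norm w := by
  simp only [norm, hr.toWord_mul_zpow_mul hw hj, List.length_append, toWord_of_zpow,
    List.length_replicate]

theorem mul_zpow_mul (hr : AvoidsAtEnds a r) (hw : AvoidsAtEnds a w) {j : ℤ} (hj : j ≠ 0) :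
    AvoidsAtEnds a (r * of a ^ j * w) := by
  have h := hr.toWord_mul_zpow_mul hw hj
  refine ⟨fun h1 => hr.1 (by simp_all), ?_, ?_⟩
  · rw [h, List.append_assoc, List.head?_append_of_ne_nil _ hr.toWord_ne_nil]
    exact hr.2.1
  · rw [h, List.getLast?_append_of_ne_nil _ hw.toWord_ne_nil]
    exact hw.2.2

end AvoidsAtEnds

theorem exists_eq_zpow_mul_mul_zpow {a : α} {x : FreeGroup α}
    (hx : x ∉ Subgroup.zpowers (of a)) :
    ∃ (f : ℤ) (r : FreeGroup α) (e : ℤ),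
      AvoidsAtEnds a r ∧ x = of a ^ f * r * of a ^ e := by
  induction hn : norm x using Nat.strong_induction_on generalizing x with
  | _ n ih =>
  by_cases hhead : ∃ b, x.toWord.head? = some (a, b)
  · obtain ⟨b, hb⟩ := hhead
    obtain ⟨L, hL⟩ := List.head?_eq_some_iff.mp hb
    have hx' : x = mk [(a, b)] * mk L := by rw [mul_mk, List.singleton_append, ← hL, mk_toWord]
    obtain ⟨k, hk⟩ := Subgroup.mem_zpowers_iff.mp (mk_singleton_mem_zpowers a b)
    have hL' : mk L ∉ Subgroup.zpowers (of a) :=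
      fun h => hx (hx' ▸ mul_mem (mk_singleton_mem_zpowers a b) h)
    have hlen : norm (mk L) < n := hn ▸ norm_mk_le.trans_lt (by simp [norm, hL])
    obtain ⟨f, r, e, hr, hrL⟩ := ih _ hlen hL' rfl
    exact ⟨k + f, r, e, hr, by rw [hx', hrL, ← hk, zpow_add]; group⟩
  by_cases hlast : ∃ b, x.toWord.getLast? = some (a, b)
  · obtain ⟨b, hb⟩ := hlast
    obtain ⟨L, hL⟩ := List.getLast?_eq_some_iff.mp hb
    have hx' : x = mk L * mk [(a, b)] := by rw [mul_mk, ← hL, mk_toWord]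
    obtain ⟨k, hk⟩ := Subgroup.mem_zpowers_iff.mp (mk_singleton_mem_zpowers a b)
    have hL' : mk L ∉ Subgroup.zpowers (of a) :=
      fun h => hx (hx' ▸ mul_mem h (mk_singleton_mem_zpowers a b))
    have hlen : norm (mk L) < n := hn ▸ norm_mk_le.trans_lt (by simp [norm, hL])
    obtain ⟨f, r, e, hr, hrL⟩ := ih _ hlen hL' rfl
    exact ⟨f, r, e + k, hr, by rw [hx', hrL, ← hk, zpow_add]; group⟩
  have hx1 : x ≠ 1 := fun h => hx (h ▸ one_mem _)
  exact ⟨0, x, 0, ⟨hx1, hhead, hlast⟩, by simp⟩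

theorem zpow_mul_mul_zpow_ne_mul_zpow_mul_mul_zpow {a : α} {s s' w : FreeGroup α} {m : ℤ}
    (hs' : s' ∉ Subgroup.zpowers (of a)) (hw : AvoidsAtEnds a w)
    (hm : norm s + norm s' < m.natAbs) (i j k : ℤ) :
    of a ^ i * s * of a ^ j ≠ s' * (of a ^ m * w * of a ^ k) := by
  intro h
  obtain ⟨f, r, e, hr, rfl⟩ := exists_eq_zpow_mul_mul_zpow hs'
  have hnorm_s' := hr.norm_zpow_mul_mul_zpow f e
  have hem : e + m ≠ 0 := by omega
  have hs : s = of a ^ (f - i) * (r * of a ^ (e + m) * w) * of a ^ (k - j) := by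
    calc s = of a ^ (-i) * (of a ^ i * s * of a ^ j) * of a ^ (-j) := by group
      _ = _ := by rw [h]; group
  have hnorm_s := (hr.mul_zpow_mul hw hem).norm_zpow_mul_mul_zpow (f - i) (k - j)
  rw [← hs, hr.norm_mul_zpow_mul hw hem] at hnorm_s
  omega

theorem zpow_mul_mul_zpow_ne_zpow_mul_mul_zpow_mul {a : α} {s s' w : FreeGroup α} {k : ℤ}
    (hs' : s' ∉ Subgroup.zpowers (of a)) (hw : AvoidsAtEnds a w)
    (hk : norm s + norm s' < k.natAbs) (i j m : ℤ) :
    of a ^ i * s * of a ^ j ≠ of a ^ m * w * of a ^ k * s' := by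
  intro h
  refine zpow_mul_mul_zpow_ne_mul_zpow_mul_mul_zpow (s := s⁻¹) (m := -k)
    (inv_mem_iff.not.mpr hs') hw.inv (by simpa using hk) (-j) (-i) (-m) ?_
  calc of a ^ (-j) * s⁻¹ * of a ^ (-i) = (of a ^ i * s * of a ^ j)⁻¹ := by group
    _ = (of a ^ m * w * of a ^ k * s')⁻¹ := by rw [h]
    _ = s'⁻¹ * (of a ^ (-k) * w⁻¹ * of a ^ (-m)) := by group

end FreeGroup

theorem norm_apply_le_wordLen {N : ℕ} {n : Fin N → ℕ} (s : ∀ i, FreeGroup (Fin (n i)))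
    (i : Fin N) : (s i).norm ≤ wordLen N n s :=
  Finset.single_le_sum (f := fun j => (s j).norm) (fun _ _ => Nat.zero_le _) (Finset.mem_univ i)

theorem one_mem_Hset (N : ℕ) (n : Fin N → ℕ) (hn : ∀ i, 2 ≤ n i) : 1 ∈ Hset N n hn :=
  fun _ => ⟨0, by simp⟩

theorem disjoint_Hset_mul_mul_Hset {N : ℕ} {n : Fin N → ℕ} {hn : ∀ i, 2 ≤ n i} {N0 : ℕ}
    (hN0 : 1 ≤ N0) {S1 : Set (∀ i, FreeGroup (Fin (n i)))}
    (hdisj : ∀ s ∈ S1, s ∉ Hset N n hn ∧ ∀ i, s ∉ Giset N n hn i)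
    (hlen : ∀ s ∈ S1, wordLen N n s ≤ N0 - 1) :
    Disjoint (Hset N n hn * S1 * Hset N n hn) (S1 * Sset N n hn N0 ∪ Sset N n hn N0 * S1) := by
  have hbound : ∀ s ∈ S1, ∀ s' ∈ S1, ∀ i, ∀ m : ℤ, 2 * (N0 : ℤ) - 1 ≤ |m| →
      (s i).norm + (s' i).norm < m.natAbs := fun s hs s' hs' i m hm => by
    have := (norm_apply_le_wordLen s i).trans (hlen s hs)
    have := (norm_apply_le_wordLen s' i).trans (hlen s' hs')
    rw [Int.abs_eq_natAbs] at hm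
    omega
  rw [Set.disjoint_left]
  rintro _ ⟨_, ⟨h, hh, s, hs, rfl⟩, h', hh', rfl⟩ hx
  obtain ⟨i, -⟩ := not_forall.mp (hdisj s hs).1
  obtain ⟨p, hp⟩ := hh i
  obtain ⟨q, hq⟩ := hh' i
  rcases hx with ⟨s', hs', z, hz, hx⟩ | ⟨z, hz, s', hs', hx⟩ <;>
    obtain ⟨m, k, w, hzi, hw1, hwh, hwl, hm, hk⟩ := hz i <;>
    have hs'i : s' i ∉ Subgroup.zpowers _ :=
      fun ⟨e, he⟩ => (hdisj s' hs').2 i ⟨e, he.symm⟩ <;>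
    have hxi := congrFun hx i <;>
    simp only [Pi.mul_apply, hp, hq, hzi] at hxi
  · exact FreeGroup.zpow_mul_mul_zpow_ne_mul_zpow_mul_mul_zpow hs'i ⟨hw1, hwh, hwl⟩
      (hbound s hs s' hs' i m hm) p q k hxi.symm
  · exact FreeGroup.zpow_mul_mul_zpow_ne_zpow_mul_mul_zpow_mul hs'i ⟨hw1, hwh, hwl⟩
      (hbound s hs s' hs' i k hk) p q m hxi.symm

theorem stmt_3_general (N : ℕ) (n : Fin N → ℕ) (hn : ∀ i, 2 ≤ n i) (N0 : ℕ) (hN0 : 1 ≤ N0)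
    (S1 : Set (∀ i, FreeGroup (Fin (n i))))
    (hdisj : ∀ s ∈ S1, s ∉ Hset N n hn ∧ ∀ i, s ∉ Giset N n hn i)
    (hlen : ∀ s ∈ S1, wordLen N n s ≤ N0 - 1) :
    (S1 * Hset N n hn) ∩ (S1 * Sset N n hn N0) = ∅ ∧
    (Hset N n hn * S1) ∩ (S1 * Sset N n hn N0) = ∅ ∧
    (Hset N n hn * S1) ∩ (Sset N n hn N0 * S1) = ∅ ∧
    (S1 * Hset N n hn) ∩ (Sset N n hn N0 * S1) = ∅ := by
  have hdisjoint := Set.disjoint_left.mp (disjoint_Hset_mul_mul_Hset hN0 hdisj hlen)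
  have h1 := one_mem_Hset N n hn
  have hS1H : S1 * Hset N n hn ⊆ Hset N n hn * S1 * Hset N n hn :=
    mul_assoc (Hset N n hn) S1 _ ▸ Set.subset_mul_right _ h1
  have hHS1 : Hset N n hn * S1 ⊆ Hset N n hn * S1 * Hset N n hn := Set.subset_mul_left _ h1
  refine ⟨?_, ?_, ?_, ?_⟩ <;>
    refine Set.eq_empty_of_forall_notMem fun x hx => hdisjoint (a := x) ?_ ?_
  exacts [hS1H hx.1, .inl hx.2, hHS1 hx.1, .inl hx.2, hHS1 hx.1, .inr hx.2, hS1H hx.1, .inr hx.2]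

/-- with G, H, Gᵢ, S₁, S as above one has
(S₁H) ∩ (S₁S) = ∅, (HS₁) ∩ (S₁S) = ∅, (HS₁) ∩ (SS₁) = ∅, (S₁H) ∩ (SS₁) = ∅. -/
theorem stmt_3 (N : ℕ) (n : Fin N → ℕ) (hn : ∀ i, 2 ≤ n i) (N0 : ℕ) (hN0 : 1 ≤ N0)
    (S1 : Set (∀ i, FreeGroup (Fin (n i)))) (hfin : S1.Finite)
    (hdisj : ∀ s ∈ S1, s ∉ Hset N n hn ∧ ∀ i, s ∉ Giset N n hn i)
    (hlen : ∀ s ∈ S1, wordLen N n s ≤ N0 - 1) :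
    (S1 * Hset N n hn) ∩ (S1 * Sset N n hn N0) = ∅ ∧
    (Hset N n hn * S1) ∩ (S1 * Sset N n hn N0) = ∅ ∧
    (Hset N n hn * S1) ∩ (Sset N n hn N0 * S1) = ∅ ∧
    (S1 * Hset N n hn) ∩ (Sset N n hn N0 * S1) = ∅ :=
  stmt_3_general N n hn N0 hN0 S1 hdisj hlen
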